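/- Let G be a connected graph of order at least 3. Then χ'_it(G) = χ(G) + 1 if and only if χ(G) ≡ 2 (mod 4) and every proper χ(G)-vertex coloring of G has all color classes of odd size; otherwise χ'_it(G) = χ(G). -/

import Mathlib

open Finset

-- The vertex label induced by an edge coloring: `twinLabel G s v = Σ_{e ∈ E_v} s e` in `ZMod k`.
open scoped Classical in
noncomputable def twinLabel {V : Type*} [Fintype V] (G : SimpleGraph V) {k : ℕ}
    (s : Sym2 V → ZMod k) (v : V) : ZMod k :=
  ∑ e ∈ G.incidenceFinset v, s e

/-- `s` is an improper twin `k`-edge coloring of `G`: the induced vertex labeling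
is a proper vertex coloring. -/
def IsImproperTwin {V : Type*} [Fintype V] (G : SimpleGraph V) (k : ℕ)
    (s : Sym2 V → ZMod k) : Prop :=
  ∀ ⦃u v : V⦄, G.Adj u v → twinLabel G s u ≠ twinLabel G s v

/-- The improper twin chromatic index: the least `k ≥ 2` admitting an improper twin
`k`-edge coloring. -/
noncomputable def improperTwinIndex {V : Type*} [Fintype V] (G : SimpleGraph V) : ℕ :=
  sInf {k | 2 ≤ k ∧ ∃ s : Sym2 V → ZMod k, IsImproperTwin G k s}

open SimpleGraph

/-!
An improper twin `k`-edge coloring is a proper coloring `c : V → ZMod k` in the image of the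
additive map `s ↦ twinLabel G s`. Putting `±x` alternately on the edges of a walk of length `m`
from `u` to `v` gives the labeling `x` at `u`, `-(-1)^m x` at `v` and `0` elsewhere. So if `G` has
an odd closed walk, every labeling whose total is divisible by `2` in `ZMod k` is attained, and if
`G` is bipartite, every labeling with equal sums over the two parts is. Conversely the total of an
attained labeling is always `2 * ∑ s e`.

For odd `k` every proper `k`-coloring qualifies. For even `n = χ(G)` the parity of the total is
`∑ |class| * label`, and relabelling two classes by a transposition makes it even unless every
class is odd and `n ≡ 2 (mod 4)`. In that case the total is `≡ ∑_{j<n} j = n(n-1)/2`, which is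
odd, so there is no twin `n`-coloring, while `n + 1` is odd (or `n = 2`, handled by labels `1, 2`
on one part).
-/

section TwinColoring

variable {V : Type*} {G : SimpleGraph V}

namespace SimpleGraph.Coloring

variable {α β : Type*}

lemma colorClass_recolorOfEquiv (e : α ≃ β) (C : G.Coloring α) (a : α) :
    (G.recolorOfEquiv e C).colorClass (e a) = C.colorClass a := by
  ext v
  simp [colorClass]

lemma ncard_colorClass [Fintype V] [DecidableEq α] (C : G.Coloring α) (a : α) :
    (C.colorClass a).ncard = #{v | C v = a} := by
  rw [colorClass, Set.ncard_eq_toFinset_card', Set.toFinset_ofPred]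

lemma sum_comp_eq_sum_ncard_smul [Fintype V] [Fintype α] [DecidableEq α] {M : Type*}
    [AddCommMonoid M] (C : G.Coloring α) (f : α → M) :
    ∑ v, f (C v) = ∑ a, (C.colorClass a).ncard • f a := by
  rw [← sum_fiberwise univ C]
  refine sum_congr rfl fun a _ => ?_
  rw [ncard_colorClass, ← sum_const]
  exact sum_congr rfl fun v hv => by rw [(mem_filter.1 hv).2]

lemma eq_iff_ne_of_adj (C : G.Coloring (Fin 2)) {u v : V} (huv : G.Adj u v) (i : Fin 2) :
    C u = i ↔ C v ≠ i := by
  have h := C.valid huv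
  revert h
  generalize C u = a
  generalize C v = b
  revert a b i
  decide

lemma neg_one_pow_length {R : Type*} [Ring R] (C : G.Coloring (Fin 2)) {u v : V}
    (p : G.Walk u v) : (-1 : R) ^ p.length = if C u = C v then 1 else -1 := by
  have hp : Even p.length ↔ C u = C v := by
    simpa using (G.recolorOfEquiv finTwoEquiv C).even_length_iff_congr p
  split_ifs with h
  · exact (hp.2 h).neg_one_pow
  · exact (Nat.not_even_iff_odd.1 (mt hp.1 h)).neg_one_pow

end SimpleGraph.Coloring

lemma sum_mul_swap {ι R : Type*} [Fintype ι] [DecidableEq ι] [CommRing R] (f g : ι → R)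
    {a b : ι} (hab : a ≠ b) :
    ∑ i, f i * g (Equiv.swap a b i) = ∑ i, f i * g i + (f a - f b) * (g b - g a) := by
  have hdiff : ∑ i, (f i * g (Equiv.swap a b i) - f i * g i) = (f a - f b) * (g b - g a) := by
    rw [Fintype.sum_eq_add a b hab fun i hi => by
      rw [Equiv.swap_apply_of_ne_of_ne hi.1 hi.2, sub_self]]
    simp only [Equiv.swap_apply_left, Equiv.swap_apply_right]
    ring
  rw [← hdiff, ← sum_add_distrib]
  simp only [add_sub_cancel]

lemma exists_equiv_sum_mul_eq_zero {ι κ : Type*} [Fintype ι] [Fintype κ] [DecidableEq ι]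
    (e₀ : ι ≃ κ) (f : ι → ZMod 2) (g : κ → ZMod 2) (hg : ∃ a b, g a ≠ g b)
    (hf : (∀ i, f i = 1) → ∑ j, g j = 0) :
    ∃ e : ι ≃ κ, ∑ i, f i * g (e i) = 0 := by
  have hone : ∀ x : ZMod 2, x ≠ 0 → x = 1 := by decide
  have hsub : ∀ x y : ZMod 2, x ≠ y → x - y = 1 := by decide
  by_cases h₀ : ∑ i, f i * g (e₀ i) = 0
  · exact ⟨e₀, h₀⟩
  -- The sum is `1`, so `f` is not constant, and swapping two indices where both `f` and
  -- `g ∘ e₀` differ adds `1` to it.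
  obtain ⟨a, b, hfab, hgab⟩ : ∃ a b, f a ≠ f b ∧ g (e₀ a) ≠ g (e₀ b) := by
    by_contra! hfg
    obtain ⟨c, d, hcd⟩ := hg
    have hcd' : f (e₀.symm c) = f (e₀.symm d) := by
      by_contra h
      exact hcd (by simpa using hfg _ _ h)
    have hconst : ∀ i, f i = f (e₀.symm c) := fun i => by
      by_contra hi
      have hc := hfg _ _ hi
      have hd := hfg _ _ (hcd' ▸ hi)
      rw [Equiv.apply_symm_apply] at hc hd
      exact hcd (hc.symm.trans hd)
    apply h₀
    rw [sum_congr rfl fun i _ => by rw [hconst i], ← mul_sum, e₀.sum_comp g]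
    by_cases hc : f (e₀.symm c) = 0
    · rw [hc, zero_mul]
    · rw [hf fun i => (hconst i).trans (hone _ hc), mul_zero]
  have hab : a ≠ b := fun h => hfab (h ▸ rfl)
  refine ⟨(Equiv.swap a b).trans e₀, ?_⟩
  have hswap := sum_mul_swap f (g ∘ e₀) hab
  simp only [Function.comp_apply] at hswap
  simp only [Equiv.trans_apply, hswap, hone _ h₀, hsub _ _ hfab, hsub _ _ hgab.symm]
  decide

lemma ZMod.sum_comp_val_eq_sum_range {M : Type*} [AddCommMonoid M] (n : ℕ) [NeZero n]
    (f : ℕ → M) : ∑ x : ZMod n, f x.val = ∑ j ∈ range n, f j := by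
  obtain ⟨m, rfl⟩ := Nat.exists_eq_succ_of_ne_zero (NeZero.ne n)
  exact Fin.sum_univ_eq_sum_range f (m + 1)

lemma sum_range_two_mul_natCast_zmod_two (m : ℕ) : ∑ j ∈ range (2 * m), (j : ZMod 2) = m := by
  induction m with
  | zero => simp
  | succ m ih =>
    rw [mul_add_one, sum_range_succ, sum_range_succ, ih]
    push_cast
    ring_nf
    reduce_mod_char

lemma ZMod.sum_castHom_zmod_two {n : ℕ} [NeZero n] (hn : 2 ∣ n) :
    ∑ x : ZMod n, ZMod.castHom hn (ZMod 2) x = ((n / 2 : ℕ) : ZMod 2) := by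
  simp_rw [ZMod.castHom_apply, ZMod.cast_eq_val]
  rw [ZMod.sum_comp_val_eq_sum_range n (fun j => (j : ZMod 2))]
  obtain ⟨m, rfl⟩ := hn
  rw [sum_range_two_mul_natCast_zmod_two, Nat.mul_div_cancel_left m two_pos]

lemma ZMod.exists_eq_two_mul_of_castHom_eq_zero {n : ℕ} [NeZero n] (hn : 2 ∣ n) {x : ZMod n}
    (hx : ZMod.castHom hn (ZMod 2) x = 0) : ∃ y, x = 2 * y := by
  rw [ZMod.castHom_apply, ZMod.cast_eq_val, ZMod.natCast_eq_zero_iff_even] at hx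
  obtain ⟨m, hm⟩ := hx
  exact ⟨m, by rw [← ZMod.natCast_zmod_val x, hm, two_mul, Nat.cast_add]⟩

lemma not_colorable_two_of_chromaticNumber_eq {n : ℕ} (hn : G.chromaticNumber = n)
    (h3 : 3 ≤ n) : ¬G.Colorable 2 := fun h => by
  have h := h.chromaticNumber_le
  rw [hn] at h
  norm_cast at h
  omega

variable [Fintype V] {k : ℕ}

noncomputable def twinLabelHom (G : SimpleGraph V) (k : ℕ) :
    (Sym2 V → ZMod k) →+ V → ZMod k where
  toFun := twinLabel G
  map_zero' := by ext; simp [twinLabel]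
  map_add' _ _ := by ext; simp [twinLabel, sum_add_distrib]

lemma twinLabel_pi_single [DecidableEq V] {e : Sym2 V} (he : e ∈ G.edgeSet) (x : ZMod k)
    (v : V) : twinLabel G (Pi.single e x) v = if v ∈ e then x else 0 := by
  rw [twinLabel, sum_pi_single']
  congr 1
  simp [incidenceSet, he]

lemma single_add_single_mem_range [DecidableEq V] {a b : V} (hab : G.Adj a b) (x : ZMod k) :
    Pi.single a x + Pi.single b x ∈ (twinLabelHom G k).range := by
  refine ⟨Pi.single s(a, b) x, funext fun v => ?_⟩
  rw [twinLabelHom, AddMonoidHom.coe_mk, ZeroHom.coe_mk, twinLabel_pi_single hab]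
  by_cases hva : v = a
  · subst hva
    simp [hab.ne.symm]
  · by_cases hvb : v = b
    · subst hvb
      simp [hva]
    · simp [hva, hvb]

lemma SimpleGraph.Walk.single_sub_single_mem_range [DecidableEq V] {u v : V} (p : G.Walk u v)
    (x : ZMod k) :
    Pi.single u x - Pi.single v ((-1) ^ p.length * x) ∈ (twinLabelHom G k).range := by
  induction p with
  | nil => simp
  | cons hab q ih =>
    convert sub_mem (single_add_single_mem_range hab x) ih using 1
    simp [pow_succ, Pi.single_neg]
    abel

lemma sub_single_sum_mem_range [DecidableEq V] {r : V} (q : ∀ v, G.Walk v r) (t : V → ZMod k) :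
    t - Pi.single r (∑ v, (-1) ^ (q v).length * t v) ∈ (twinLabelHom G k).range := by
  convert sum_mem fun v (_ : v ∈ univ) => (q v).single_sub_single_mem_range (t v) using 1
  rw [sum_sub_distrib, univ_sum_single]
  exact congrArg _ (map_sum (AddMonoidHom.single (fun _ => ZMod k) r) _ _)

lemma mem_range_of_sum_eq_two_mul (hG : G.Connected) (h2 : ¬G.Colorable 2) {t : V → ZMod k}
    {y : ZMod k} (ht : ∑ v, t v = 2 * y) : t ∈ (twinLabelHom G k).range := by
  classical
  obtain ⟨r, p, hp⟩ : ∃ r, ∃ p : G.Walk r r, Odd p.length := by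
    simpa [two_colorable_iff_forall_loop_even] using h2
  have hq : ∀ v, ∃ q : G.Walk v r, Even q.length := fun v => by
    obtain ⟨q⟩ := hG v r
    rcases Nat.even_or_odd q.length with hq | hq
    · exact ⟨q, hq⟩
    · exact ⟨q.append p, by simpa using hq.add_odd hp⟩
  choose q hq using hq
  have hr : Pi.single r (2 * y) ∈ (twinLabelHom G k).range := by
    convert p.single_sub_single_mem_range y using 1
    simp [hp.neg_one_pow, two_mul, Pi.single_add, Pi.single_neg]
  have hsum : ∑ v, (-1) ^ (q v).length * t v = 2 * y := by
    simp only [(hq _).neg_one_pow, one_mul, ht]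
  convert add_mem (sub_single_sum_mem_range q t) hr using 1
  rw [hsum, sub_add_cancel]

lemma mem_range_of_fin_two_coloring (hG : G.Connected) (C : G.Coloring (Fin 2)) (i : Fin 2)
    {t : V → ZMod k} (ht : ∑ v, (if C v = i then t v else -t v) = 0) :
    t ∈ (twinLabelHom G k).range := by
  classical
  obtain ⟨r⟩ := hG.nonempty
  have hsign : ∀ v, (-1) ^ (hG v r).some.length * t v
      = (if C r = i then 1 else -1) * (if C v = i then t v else -t v) := fun v => by
    rw [C.neg_one_pow_length]
    split_ifs <;> simp_all
    exact ((by decide : ∀ a b c : Fin 2, a ≠ b → b ≠ c → a ≠ c → False) _ _ _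
      ‹¬C v = C r› ‹¬C r = i› ‹¬C v = i›).elim
  have hsum : ∑ v, (-1) ^ (hG v r).some.length * t v = 0 := by
    simp_rw [hsign, ← mul_sum, ht, mul_zero]
  convert sub_single_sum_mem_range (fun v => (hG v r).some) t using 1
  rw [hsum, Pi.single_zero, sub_zero]

lemma twinLabel_eq_sum_edgeFinset [DecidableEq V] [DecidableRel G.Adj] (s : Sym2 V → ZMod k)
    (v : V) : twinLabel G s v = ∑ e ∈ G.edgeFinset, if v ∈ e then s e else 0 := by
  rw [twinLabel, ← sum_filter]
  congr 1
  convert G.incidenceFinset_eq_filter v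

lemma sum_twinLabel [DecidableRel G.Adj] (s : Sym2 V → ZMod k) :
    ∑ v, twinLabel G s v = 2 * ∑ e ∈ G.edgeFinset, s e := by
  classical
  simp_rw [twinLabel_eq_sum_edgeFinset]
  rw [sum_comm, mul_sum]
  refine sum_congr rfl fun e he => ?_
  have hcard : #{v | v ∈ e} = 2 := by
    rw [← Sym2.card_toFinset_of_not_isDiag e (G.not_isDiag_of_mem_edgeSet (mem_edgeFinset.1 he))]
    congr 1
    ext v
    simp
  rw [← sum_filter, sum_const, hcard, two_nsmul, two_mul]

lemma exists_isImproperTwin_of_mem_range (C : G.Coloring (ZMod k))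
    (hC : ⇑C ∈ (twinLabelHom G k).range) : ∃ s, IsImproperTwin G k s := by
  obtain ⟨s, hs⟩ := hC
  have hs : twinLabel G s = C := hs
  exact ⟨s, fun u v huv => by rw [hs]; exact C.valid huv⟩

lemma colorable_of_isImproperTwin [NeZero k] {s : Sym2 V → ZMod k} (hs : IsImproperTwin G k s) :
    G.Colorable k := by
  simpa using (Coloring.mk (twinLabel G s) fun huv => hs huv).colorable

lemma exists_isImproperTwin_of_odd (hG : G.Connected) (h2 : ¬G.Colorable 2) (hk : Odd k)
    (hcol : G.Colorable k) : ∃ s, IsImproperTwin G k s := by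
  classical
  have : NeZero k := ⟨hk.pos.ne'⟩
  let C : G.Coloring (ZMod k) := hcol.toColoring (by simp)
  let u := ZMod.unitOfCoprime 2 (Nat.coprime_two_left.2 hk)
  have hu : ∑ v, C v = 2 * (↑u⁻¹ * ∑ v, C v) := by
    have h2u : (u : ZMod k) = 2 := by simp [u]
    rw [← h2u, Units.mul_inv_cancel_left]
  exact exists_isImproperTwin_of_mem_range C (mem_range_of_sum_eq_two_mul hG h2 hu)

lemma exists_isImproperTwin_of_even {n : ℕ} (hG : G.Connected) (h2 : ¬G.Colorable 2)
    (hn : Even n) (C : G.Coloring (Fin n)) (hC : n % 4 = 0 ∨ ∃ i, Even (C.colorClass i).ncard) :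
    ∃ s, IsImproperTwin G n s := by
  classical
  have : NeZero n := ⟨fun h => by subst h; exact (C hG.nonempty.some).elim0⟩
  have h2n : 2 ∣ n := even_iff_two_dvd.1 hn
  set ψ := ZMod.castHom h2n (ZMod 2)
  obtain ⟨e, he⟩ := exists_equiv_sum_mul_eq_zero (ZMod.finEquiv n).toEquiv
    (fun i => ((C.colorClass i).ncard : ZMod 2)) ψ ⟨0, 1, by simp⟩ fun hall => by
      rw [ZMod.sum_castHom_zmod_two, ZMod.natCast_eq_zero_iff_even]
      rcases hC with h4 | ⟨i, hi⟩
      · exact Nat.even_iff.2 (by omega)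
      · simpa [(ZMod.natCast_eq_zero_iff_even).2 hi] using hall i
  let D := G.recolorOfEquiv e C
  obtain ⟨y, hy⟩ := ZMod.exists_eq_two_mul_of_castHom_eq_zero h2n (x := ∑ v, D v) <| by
    calc ψ (∑ v, D v) = ∑ v, ψ (e (C v)) := map_sum ψ _ _
      _ = ∑ i, (C.colorClass i).ncard • ψ (e i) := C.sum_comp_eq_sum_ncard_smul (ψ ∘ e)
      _ = 0 := by simpa [nsmul_eq_mul] using he
  exact exists_isImproperTwin_of_mem_range D (mem_range_of_sum_eq_two_mul hG h2 hy)

lemma exists_isImproperTwin_of_supported_colorClass (hG : G.Connected) (C : G.Coloring (Fin 2))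
    (i : Fin 2) {t : V → ZMod k} (ht₀ : ∀ v, C v ≠ i → t v = 0) (ht₁ : ∀ v, C v = i → t v ≠ 0)
    (hsum : ∑ v, t v = 0) : ∃ s, IsImproperTwin G k s := by
  let D : G.Coloring (ZMod k) := Coloring.mk t fun {u v} huv htuv => by
    by_cases hu : C u = i
    · exact ht₁ u hu (htuv.trans (ht₀ v ((C.eq_iff_ne_of_adj huv i).1 hu)))
    · have hv : C v = i := by simpa using mt (C.eq_iff_ne_of_adj huv i).2 hu
      exact ht₁ v hv (htuv.symm.trans (ht₀ u hu))
  refine exists_isImproperTwin_of_mem_range D (mem_range_of_fin_two_coloring hG C i ?_)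
  rw [← hsum]
  refine sum_congr rfl fun v _ => ?_
  split_ifs with hv
  · rfl
  · show -t v = t v
    rw [ht₀ v hv, neg_zero]

lemma exists_isImproperTwin_two (hG : G.Connected) (C : G.Coloring (Fin 2)) (i : Fin 2)
    (hi : Even #{v | C v = i}) : ∃ s, IsImproperTwin G 2 s := by
  refine exists_isImproperTwin_of_supported_colorClass hG C i
    (t := fun v => if C v = i then 1 else 0) (fun v hv => if_neg hv) (fun v hv => by simp [hv]) ?_
  rw [sum_boole, ZMod.natCast_eq_zero_iff_even]
  exact hi

lemma exists_isImproperTwin_three (hG : G.Connected) (C : G.Coloring (Fin 2)) (i : Fin 2)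
    (hi : 2 ≤ #{v | C v = i}) : ∃ s, IsImproperTwin G 3 s := by
  classical
  -- Label the class of `i` by `1`, raised to `2` on a subset `S` with `#S ≡ -#class (mod 3)`.
  obtain ⟨S, hSP, hS⟩ := exists_subset_card_eq (s := {v | C v = i})
    (n := (3 - #{v | C v = i} % 3) % 3) (by omega)
  refine exists_isImproperTwin_of_supported_colorClass hG C i
    (t := fun v => (if C v = i then 1 else 0) + (if v ∈ S then 1 else 0))
    (fun v hv => ?_) (fun v hv => ?_) ?_
  · have hvS : v ∉ S := fun h => hv (by simpa using hSP h)
    simp [hv, hvS]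
  · rw [if_pos hv]
    split_ifs <;> decide
  · rw [sum_add_distrib, sum_boole, sum_boole, filter_mem_eq_inter, univ_inter, hS,
      ← Nat.cast_add, ZMod.natCast_eq_zero_iff]
    omega

lemma not_isImproperTwin {n : ℕ} (hn : n % 4 = 2)
    (hodd : ∀ C : G.Coloring (Fin n), ∀ i : Fin n, Odd (C.colorClass i).ncard)
    (s : Sym2 V → ZMod n) : ¬IsImproperTwin G n s := by
  classical
  intro hs
  have : NeZero n := ⟨by omega⟩
  have h2n : 2 ∣ n := by omega
  set ψ := ZMod.castHom h2n (ZMod 2)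
  let C : G.Coloring (ZMod n) := Coloring.mk (twinLabel G s) fun huv => hs huv
  have hC : ∀ x, Odd (C.colorClass x).ncard := fun x => by
    let e : ZMod n ≃ Fin n := (ZMod.finEquiv n).symm.toEquiv
    have := hodd (G.recolorOfEquiv e C) (e x)
    rwa [Coloring.colorClass_recolorOfEquiv] at this
  have h1 : ψ (∑ v, C v) = 1 := by
    calc ψ (∑ v, C v) = ∑ x, (C.colorClass x).ncard • ψ x := by
          rw [map_sum]; exact C.sum_comp_eq_sum_ncard_smul ψ
      _ = ∑ x, ψ x := sum_congr rfl fun x _ => by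
          rw [nsmul_eq_mul, ZMod.natCast_eq_one_iff_odd.2 (hC x), one_mul]
      _ = 1 := by
          rw [ZMod.sum_castHom_zmod_two, ZMod.natCast_eq_one_iff_odd]
          exact Nat.odd_iff.2 (by omega)
  have h0 : ψ (∑ v, C v) = 0 := by
    change ψ (∑ v, twinLabel G s v) = 0
    rw [sum_twinLabel, map_mul, map_ofNat, show (2 : ZMod 2) = 0 from rfl, zero_mul]
  exact one_ne_zero (h1.symm.trans h0)

lemma exists_isImproperTwin_of_not_exceptional {n : ℕ} (hG : G.Connected)
    (hn : G.chromaticNumber = n) (h2n : 2 ≤ n)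
    (h : ¬(n % 4 = 2 ∧ ∀ C : G.Coloring (Fin n), ∀ i : Fin n, Odd (C.colorClass i).ncard)) :
    ∃ s, IsImproperTwin G n s := by
  classical
  have hcol : G.Colorable n := chromaticNumber_le_iff_colorable.1 hn.le
  rcases Nat.even_or_odd n with heven | hodd
  · obtain ⟨C, hC⟩ :
        ∃ C : G.Coloring (Fin n), n % 4 = 0 ∨ ∃ i, Even (C.colorClass i).ncard := by
      by_cases h4 : n % 4 = 0
      · exact ⟨hcol.some, Or.inl h4⟩
      · simp only [not_and, not_forall, Nat.not_odd_iff_even] at h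
        obtain ⟨C, hC⟩ := h (by rw [Nat.even_iff] at heven; omega)
        exact ⟨C, Or.inr hC⟩
    obtain rfl | h3 := h2n.eq_or_lt
    · obtain ⟨i, hi⟩ := hC.resolve_left (by norm_num)
      exact exists_isImproperTwin_two hG C i (by rwa [← Coloring.ncard_colorClass])
    · exact exists_isImproperTwin_of_even hG (not_colorable_two_of_chromaticNumber_eq hn h3)
        heven C hC
  · have h3 : 3 ≤ n := by rw [Nat.odd_iff] at hodd; omega
    exact exists_isImproperTwin_of_odd hG (not_colorable_two_of_chromaticNumber_eq hn h3) hodd hcol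

lemma exists_isImproperTwin_succ_of_mod_four_eq_two {n : ℕ} (hG : G.Connected)
    (hV : 3 ≤ Fintype.card V) (hn : G.chromaticNumber = n) (h4 : n % 4 = 2) :
    ∃ s, IsImproperTwin G (n + 1) s := by
  classical
  have hcol : G.Colorable n := chromaticNumber_le_iff_colorable.1 hn.le
  obtain rfl | h3 : n = 2 ∨ 3 ≤ n := by omega
  · obtain ⟨i, hi⟩ := Fintype.exists_lt_card_fiber_of_mul_lt_card (f := hcol.some) (n := 1)
      (by simp; omega)
    exact exists_isImproperTwin_three hG hcol.some i hi
  · exact exists_isImproperTwin_of_odd hG (not_colorable_two_of_chromaticNumber_eq hn h3)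
      (Nat.odd_iff.2 (by omega)) (hcol.mono (by omega))

end TwinColoring

theorem stmt_9 {V : Type*} [Fintype V] (G : SimpleGraph V) (hG : G.Connected)
    (h3 : 3 ≤ Fintype.card V) (n : ℕ) (hn : G.chromaticNumber = n) :
    (improperTwinIndex G = n + 1 ↔
      (n % 4 = 2 ∧
        ∀ C : G.Coloring (Fin n), ∀ i : Fin n, Odd (C.colorClass i).ncard)) ∧
    (¬ (n % 4 = 2 ∧
        ∀ C : G.Coloring (Fin n), ∀ i : Fin n, Odd (C.colorClass i).ncard) →
      improperTwinIndex G = n) := by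
  have : Nontrivial V := Fintype.one_lt_card_iff_nontrivial.1 (by omega)
  have h2n : 2 ≤ n := by
    have h := (two_le_chromaticNumber_iff_ne_bot (G := G)).2 fun h => not_connected_bot (h ▸ hG)
    rw [hn] at h
    exact_mod_cast h
  have hlb : n ∈ lowerBounds {k | 2 ≤ k ∧ ∃ s, IsImproperTwin G k s} := by
    rintro k ⟨hk, s, hs⟩
    have : NeZero k := ⟨by omega⟩
    have h := (colorable_of_isImproperTwin hs).chromaticNumber_le
    rw [hn] at h
    exact_mod_cast h
  by_cases hP : n % 4 = 2 ∧ ∀ C : G.Coloring (Fin n), ∀ i : Fin n, Odd (C.colorClass i).ncard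
  · have hidx : improperTwinIndex G = n + 1 := IsLeast.csInf_eq
      ⟨⟨by omega, exists_isImproperTwin_succ_of_mod_four_eq_two hG h3 hn hP.1⟩, fun k hk =>
        (hlb hk).lt_of_ne (by rintro rfl; exact hk.2.elim (not_isImproperTwin hP.1 hP.2))⟩
    exact ⟨iff_of_true hidx hP, fun h => absurd hP h⟩
  · have hidx : improperTwinIndex G = n :=
      IsLeast.csInf_eq ⟨⟨h2n, exists_isImproperTwin_of_not_exceptional hG hn h2n hP⟩, hlb⟩
    exact ⟨iff_of_false (by omega) hP, fun _ => hidx⟩
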